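/- Let (L, [·,·], Δ = ad(r), α, r) be a coboundary Hom-Lie superbialgebra and let β : L → L be an even morphism of Hom-Lie superbialgebras such that β^{⊗2}(r) = r. Then L_β = (L, β∘[·,·], Δ∘β, βα, r) is also a coboundary Hom-Lie superbialgebra, which is multiplicative if L is; moreover, if L is quasi-triangular then so is L_β (i.e. r also satisfies the CHYBE with respect to the bracket β∘[·,·] and the map βα). -/

import Mathlib

open TensorProduct

variable (K : Type*) [Field K] [CharZero K]

/-- The super sign `(-1)^{p·q}` for parities `p q : ZMod 2`. -/
def eps (p q : ZMod 2) : K := (-1 : K) ^ (p.val * q.val)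

variable {K}

section Defs

variable {L M : Type*} [AddCommGroup L] [Module K L] [AddCommGroup M] [Module K M]

/-- `x` is homogeneous of parity `p` with respect to the grading involution `σ`
(`σ` acts as `(-1)^i` on the degree-`i` part of the `ℤ₂`-graded space). -/
def IsHomog (σ : L →ₗ[K] L) (p : ZMod 2) (x : L) : Prop :=
  σ x = ((-1 : K) ^ p.val) • x

/-- The operator multiplying a homogeneous element of parity `q` by `(-1)^{p·q}`. -/
noncomputable def signPow (σ : L →ₗ[K] L) (p : ZMod 2) : L →ₗ[K] L :=
  ((2 : K)⁻¹ * (1 + (-1 : K) ^ p.val)) • (LinearMap.id : L →ₗ[K] L)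
    + ((2 : K)⁻¹ * (1 - (-1 : K) ^ p.val)) • σ

/-- The operator multiplying `x ⊗ y` (with `x, y` homogeneous of parities `p, q`)
by the Koszul sign `(-1)^{p·q}`. -/
noncomputable def signOp (σL : L →ₗ[K] L) (σM : M →ₗ[K] M) :
    L ⊗[K] M →ₗ[K] L ⊗[K] M :=
  (2 : K)⁻¹ • ((LinearMap.id : L ⊗[K] M →ₗ[K] L ⊗[K] M)
    + TensorProduct.map σL LinearMap.id
    + TensorProduct.map LinearMap.id σM
    - TensorProduct.map σL σM)

/-- The super twist `τ(x ⊗ y) = (-1)^{|x||y|} y ⊗ x`. -/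
noncomputable def superTwist (σ : L →ₗ[K] L) : L ⊗[K] L →ₗ[K] L ⊗[K] L :=
  (TensorProduct.comm K L L).toLinearMap ∘ₗ signOp σ σ

/-- The super cyclic map `ξ(x ⊗ y ⊗ z) = (-1)^{|x|(|y|+|z|)} y ⊗ z ⊗ x`. -/
noncomputable def superCyclic (σ : L →ₗ[K] L) :
    L ⊗[K] (L ⊗[K] L) →ₗ[K] L ⊗[K] (L ⊗[K] L) :=
  (TensorProduct.assoc K L L L).toLinearMap
    ∘ₗ (TensorProduct.comm K L (L ⊗[K] L)).toLinearMap
    ∘ₗ signOp σ (TensorProduct.map σ σ)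

/-- The adjoint action `ad_x` on `L ⊗ L`, for `x` homogeneous of parity `p`:
`ad_x(y₁ ⊗ y₂) = [x,y₁] ⊗ α(y₂) + (-1)^{|x||y₁|} α(y₁) ⊗ [x,y₂]`. -/
noncomputable def adT (σ : L →ₗ[K] L) (br : L →ₗ[K] L →ₗ[K] L) (α : L →ₗ[K] L)
    (p : ZMod 2) (x : L) : L ⊗[K] L →ₗ[K] L ⊗[K] L :=
  TensorProduct.map (br x) α + TensorProduct.map (α ∘ₗ signPow σ p) (br x)

/-- The adjoint action `ad_x` on `L ⊗ (L ⊗ L)`, for `x` homogeneous of parity `p`. -/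
noncomputable def adT3 (σ : L →ₗ[K] L) (br : L →ₗ[K] L →ₗ[K] L) (α : L →ₗ[K] L)
    (p : ZMod 2) (x : L) :
    L ⊗[K] (L ⊗[K] L) →ₗ[K] L ⊗[K] (L ⊗[K] L) :=
  TensorProduct.map (br x) (TensorProduct.map α α)
    + TensorProduct.map (α ∘ₗ signPow σ p) (TensorProduct.map (br x) α)
    + TensorProduct.map (α ∘ₗ signPow σ p)
        (TensorProduct.map (α ∘ₗ signPow σ p) (br x))

/-- A Hom-Lie superalgebra `(L, [·,·], α)` with grading involution `σ`:
the bracket and `α` are even, the bracket is skew-supersymmetric and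
satisfies the Hom-super-Jacobi identity. -/
def IsHomLieSuperalgebra (σ : L →ₗ[K] L) (br : L →ₗ[K] L →ₗ[K] L) (α : L →ₗ[K] L) : Prop :=
  σ ∘ₗ σ = LinearMap.id
  ∧ (∀ x y, σ (br x y) = br (σ x) (σ y))
  ∧ (∀ x, σ (α x) = α (σ x))
  ∧ (∀ p q x y, IsHomog σ p x → IsHomog σ q y → br x y = -(eps K p q) • br y x)
  ∧ (∀ p q r x y z, IsHomog σ p x → IsHomog σ q y → IsHomog σ r z →
      eps K p r • br (α x) (br y z) + eps K r q • br (α z) (br x y)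
        + eps K q p • br (α y) (br z x) = 0)

/-- Multiplicativity: `α([x,y]) = [α(x), α(y)]`. -/
def IsMultiplicative (br : L →ₗ[K] L →ₗ[K] L) (α : L →ₗ[K] L) : Prop :=
  ∀ x y, α (br x y) = br (α x) (α y)

/-- A Hom-Lie supercoalgebra `(L, Δ, α)` with grading involution `σ`. -/
def IsHomLieSupercoalgebra (σ α : L →ₗ[K] L) (Δ : L →ₗ[K] L ⊗[K] L) : Prop :=
  σ ∘ₗ σ = LinearMap.id
  ∧ (∀ x, σ (α x) = α (σ x))
  ∧ TensorProduct.map σ σ ∘ₗ Δ = Δ ∘ₗ σ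
  ∧ (∀ x, ∃ u, Δ x = u - superTwist σ u)
  ∧ (LinearMap.id + superCyclic σ + superCyclic σ ∘ₗ superCyclic σ)
      ∘ₗ TensorProduct.map α Δ ∘ₗ Δ = 0

/-- Co-multiplicativity: `Δ ∘ α = α^{⊗2} ∘ Δ`. -/
def IsComultiplicative (α : L →ₗ[K] L) (Δ : L →ₗ[K] L ⊗[K] L) : Prop :=
  Δ ∘ₗ α = TensorProduct.map α α ∘ₗ Δ

/-- A Hom-Lie superbialgebra `(L, [·,·], Δ, α)`. -/
def IsHomLieSuperbialgebra (σ : L →ₗ[K] L) (br : L →ₗ[K] L →ₗ[K] L) (α : L →ₗ[K] L)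
    (Δ : L →ₗ[K] L ⊗[K] L) : Prop :=
  IsHomLieSuperalgebra σ br α
  ∧ IsHomLieSupercoalgebra σ α Δ
  ∧ ∀ p q x y, IsHomog σ p x → IsHomog σ q y →
      Δ (br x y) = adT σ br α p (α x) (Δ y) - eps K p q • adT σ br α q (α y) (Δ x)

/-- A multiplicative Hom-Lie superbialgebra. -/
def IsMultHomLieSuperbialgebra (σ : L →ₗ[K] L) (br : L →ₗ[K] L →ₗ[K] L) (α : L →ₗ[K] L)
    (Δ : L →ₗ[K] L ⊗[K] L) : Prop :=
  IsHomLieSuperbialgebra σ br α Δ ∧ IsMultiplicative br α ∧ IsComultiplicative α Δ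

/-- An admissible Hom-Lie superalgebra: `[(Id - α²)(x), α(y)] = 0`. -/
def IsAdmissible (σ : L →ₗ[K] L) (br : L →ₗ[K] L →ₗ[K] L) (α : L →ₗ[K] L) : Prop :=
  IsHomLieSuperalgebra σ br α ∧ ∀ x y, br (x - α (α x)) (α y) = 0

/-- A morphism of Hom-Lie superbialgebras: an even linear map commuting with the
twist maps, the brackets and the cobrackets. -/
def IsBialgMorphism {L₂ : Type*} [AddCommGroup L₂] [Module K L₂]
    (σ₁ : L →ₗ[K] L) (br₁ : L →ₗ[K] L →ₗ[K] L) (α₁ : L →ₗ[K] L) (Δ₁ : L →ₗ[K] L ⊗[K] L)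
    (σ₂ : L₂ →ₗ[K] L₂) (br₂ : L₂ →ₗ[K] L₂ →ₗ[K] L₂) (α₂ : L₂ →ₗ[K] L₂)
    (Δ₂ : L₂ →ₗ[K] L₂ ⊗[K] L₂) (f : L →ₗ[K] L₂) : Prop :=
  (∀ x, σ₂ (f x) = f (σ₁ x)) ∧ (∀ x, α₂ (f x) = f (α₁ x))
  ∧ (∀ x y, f (br₁ x y) = br₂ (f x) (f y))
  ∧ TensorProduct.map f f ∘ₗ Δ₁ = Δ₂ ∘ₗ f

/-- A representation `ρ` of the Hom-Lie superalgebra `(L, br, αg)` on `(M, σM)`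
with respect to `A`. -/
def IsRepresentation (σg : L →ₗ[K] L) (br : L →ₗ[K] L →ₗ[K] L) (αg : L →ₗ[K] L)
    (σM A : M →ₗ[K] M) (ρ : L →ₗ[K] M →ₗ[K] M) : Prop :=
  (∀ x v, σM (ρ x v) = ρ (σg x) (σM v))
  ∧ (∀ x, ρ (αg x) ∘ₗ A = A ∘ₗ ρ x)
  ∧ (∀ p q x y, IsHomog σg p x → IsHomog σg q y →
      ρ (br x y) ∘ₗ A = ρ (αg x) ∘ₗ ρ y - eps K p q • (ρ (αg y) ∘ₗ ρ x))

/-- The signed middle-four interchange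
`(r₁ ⊗ r₂) ⊗ (r₁' ⊗ r₂') ↦ (-1)^{|r₂||r₁'|} (r₁ ⊗ r₁') ⊗ (r₂ ⊗ r₂')`. -/
noncomputable def signedMidSwap (σ : L →ₗ[K] L) :
    (L ⊗[K] L) ⊗[K] (L ⊗[K] L) →ₗ[K] (L ⊗[K] L) ⊗[K] (L ⊗[K] L) :=
  (TensorProduct.assoc K (L ⊗[K] L) L L).toLinearMap
    ∘ₗ TensorProduct.map (TensorProduct.assoc K L L L).symm.toLinearMap LinearMap.id
    ∘ₗ TensorProduct.map (TensorProduct.map LinearMap.id (superTwist σ)) LinearMap.id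
    ∘ₗ TensorProduct.map (TensorProduct.assoc K L L L).toLinearMap LinearMap.id
    ∘ₗ (TensorProduct.assoc K (L ⊗[K] L) L L).symm.toLinearMap

/-- `[r₁₂, r'₁₃] = Σ (-1)^{|r'₁||r₂|} [r₁,r'₁] ⊗ α(r₂) ⊗ α(r'₂)`. -/
noncomputable def br1213 (σ : L →ₗ[K] L) (br : L →ₗ[K] L →ₗ[K] L) (α : L →ₗ[K] L)
    (r r' : L ⊗[K] L) : L ⊗[K] (L ⊗[K] L) :=
  TensorProduct.map (TensorProduct.lift br) (TensorProduct.map α α)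
    (signedMidSwap σ (r ⊗ₜ[K] r'))

/-- `[r₁₂, r'₂₃] = Σ α(r₁) ⊗ [r₂,r'₁] ⊗ α(r'₂)`. -/
noncomputable def br1223 (br : L →ₗ[K] L →ₗ[K] L) (α : L →ₗ[K] L)
    (r r' : L ⊗[K] L) : L ⊗[K] (L ⊗[K] L) :=
  TensorProduct.map α
      (TensorProduct.map (TensorProduct.lift br) α
        ∘ₗ (TensorProduct.assoc K L L L).symm.toLinearMap)
    ((TensorProduct.assoc K L L (L ⊗[K] L)).toLinearMap (r ⊗ₜ[K] r'))

/-- `[r₁₃, r'₂₃] = Σ (-1)^{|r'₁||r₂|} α(r₁) ⊗ α(r'₁) ⊗ [r₂,r'₂]`. -/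
noncomputable def br1323 (σ : L →ₗ[K] L) (br : L →ₗ[K] L →ₗ[K] L) (α : L →ₗ[K] L)
    (r r' : L ⊗[K] L) : L ⊗[K] (L ⊗[K] L) :=
  (TensorProduct.assoc K L L L).toLinearMap
    (TensorProduct.map (TensorProduct.map α α) (TensorProduct.lift br)
      (signedMidSwap σ (r ⊗ₜ[K] r')))

/-- The left-hand side `[[r,r]]^α` of the classical Hom-Yang-Baxter equation. -/
noncomputable def chybeEl (σ : L →ₗ[K] L) (br : L →ₗ[K] L →ₗ[K] L) (α : L →ₗ[K] L)
    (r : L ⊗[K] L) : L ⊗[K] (L ⊗[K] L) :=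
  br1213 σ br α r r + br1223 br α r r + br1323 σ br α r r

/-- A coboundary Hom-Lie superbialgebra. -/
def IsCoboundary (σ : L →ₗ[K] L) (br : L →ₗ[K] L →ₗ[K] L) (α : L →ₗ[K] L)
    (Δ : L →ₗ[K] L ⊗[K] L) (r : L ⊗[K] L) : Prop :=
  IsHomLieSuperbialgebra σ br α Δ
  ∧ TensorProduct.map α α r = r
  ∧ ∀ p x, IsHomog σ p x → Δ x = adT σ br α p x r

/-- A quasi-triangular Hom-Lie superbialgebra: a coboundary one where `r`
satisfies the classical Hom-Yang-Baxter equation. -/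
def IsQuasiTriangular (σ : L →ₗ[K] L) (br : L →ₗ[K] L →ₗ[K] L) (α : L →ₗ[K] L)
    (Δ : L →ₗ[K] L ⊗[K] L) (r : L ⊗[K] L) : Prop :=
  IsCoboundary σ br α Δ r ∧ chybeEl σ br α r = 0

/-- The global linear map `x ↦ ad_x(r) = Σ [x,r₁] ⊗ α(r₂) + (-1)^{|x||r₁|} α(r₁) ⊗ [x,r₂]`. -/
noncomputable def adMap (σ : L →ₗ[K] L) (br : L →ₗ[K] L →ₗ[K] L) (α : L →ₗ[K] L)
    (r : L ⊗[K] L) : L →ₗ[K] L ⊗[K] L :=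
  (TensorProduct.map (TensorProduct.lift br) α
      ∘ₗ (TensorProduct.assoc K L L L).symm.toLinearMap
    + TensorProduct.map α (TensorProduct.lift br)
        ∘ₗ (TensorProduct.assoc K L L L).toLinearMap
        ∘ₗ TensorProduct.map (superTwist σ) LinearMap.id
        ∘ₗ (TensorProduct.assoc K L L L).symm.toLinearMap)
  ∘ₗ (TensorProduct.mk K L (L ⊗[K] L)).flip r

end Defs

/-!
Every structure map of `L_β` is the corresponding map of `L` followed by `β`, `β ⊗ β` or
`β ⊗ β ⊗ β`; e.g. `ad^β_x = (β ⊗ β) ∘ ad_x` and `[[r,r]]^{βα} = β^{⊗3} [[r,r]]^α`. Being even,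
`β` commutes with the super cyclic map, and commuting with `α` and the bracket it intertwines
`ad_x` with `ad_{β x}`. Hence each identity required of `L_β` is the image under a
power of `β` of the same identity of `L`, taken at `β`-translated arguments, and `β^{⊗2} r = r`
keeps `Δ ∘ β = ad(r)`.
-/

section Twist

variable {K L : Type*} [Field K] [AddCommGroup L] [Module K L]
  {σ : L →ₗ[K] L} {br : L →ₗ[K] L →ₗ[K] L} {α β : L →ₗ[K] L} {Δ : L →ₗ[K] L ⊗[K] L}
  {r : L ⊗[K] L}

theorem IsHomog.map_of_comm {p : ZMod 2} {x : L} (hβσ : ∀ x, σ (β x) = β (σ x))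
    (hx : IsHomog σ p x) : IsHomog σ p (β x) := by
  rw [IsHomog, hβσ, hx, map_smul]

theorem signPow_map_of_comm (hβσ : ∀ x, σ (β x) = β (σ x))
    (p : ZMod 2) (x : L) : signPow σ p (β x) = β (signPow σ p x) := by
  simp [signPow, hβσ]

theorem signOp_comp_map {M : Type*} [AddCommGroup M] [Module K M] {σL f : L →ₗ[K] L}
    {σM g : M →ₗ[K] M} (hf : σL ∘ₗ f = f ∘ₗ σL) (hg : σM ∘ₗ g = g ∘ₗ σM) :
    signOp σL σM ∘ₗ map f g = map f g ∘ₗ signOp σL σM := by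
  simp only [signOp, LinearMap.smul_comp, LinearMap.comp_smul, LinearMap.add_comp,
    LinearMap.comp_add, LinearMap.sub_comp, LinearMap.comp_sub, LinearMap.id_comp,
    LinearMap.comp_id, ← map_comp, hf, hg]

theorem superCyclic_map_of_comm (hβσ : ∀ x, σ (β x) = β (σ x))
    (t : L ⊗[K] (L ⊗[K] L)) :
    superCyclic σ (map β (map β β) t) = map β (map β β) (superCyclic σ t) := by
  have hσβ : σ ∘ₗ β = β ∘ₗ σ := LinearMap.ext hβσ
  have hsign := LinearMap.congr_fun
    (signOp_comp_map (σM := map σ σ) (g := map β β) hσβ (by rw [← map_comp, ← map_comp, hσβ])) t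
  simp only [LinearMap.comp_apply] at hsign
  simp only [superCyclic, LinearMap.comp_apply, LinearEquiv.coe_coe, hsign, ← map_comm,
    ← map_map_assoc]

theorem adT_compr₂ (p : ZMod 2) (x : L) (t : L ⊗[K] L) :
    adT σ (br.compr₂ β) (β ∘ₗ α) p x t = map β β (adT σ br α p x t) := by
  induction t using TensorProduct.induction_on with
  | zero => simp
  | tmul y z => simp [adT]
  | add t t' ht ht' => simp only [map_add, ht, ht']

theorem map_adT (hβσ : ∀ x, σ (β x) = β (σ x)) (hβα : ∀ x, α (β x) = β (α x))
    (hβbr : ∀ x y, β (br x y) = br (β x) (β y)) (p : ZMod 2) (x : L) (t : L ⊗[K] L) :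
    map β β (adT σ br α p x t) = adT σ br α p (β x) (map β β t) := by
  induction t using TensorProduct.induction_on with
  | zero => simp
  | tmul y z => simp [adT, hβbr, hβα, signPow_map_of_comm hβσ]
  | add t t' ht ht' => simp only [map_add, ht, ht']

theorem br1213_compr₂ (r r' : L ⊗[K] L) :
    br1213 σ (br.compr₂ β) (β ∘ₗ α) r r' = map β (map β β) (br1213 σ br α r r') := by
  rw [br1213, br1213, lift_compr₂, map_comp, map_comp, LinearMap.comp_apply]

theorem br1223_compr₂ (r r' : L ⊗[K] L) :
    br1223 (br.compr₂ β) (β ∘ₗ α) r r' = map β (map β β) (br1223 br α r r') := by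
  rw [br1223, br1223, lift_compr₂, map_comp β β, LinearMap.comp_assoc, map_comp β (map β β),
    LinearMap.comp_apply]

theorem br1323_compr₂ (r r' : L ⊗[K] L) :
    br1323 σ (br.compr₂ β) (β ∘ₗ α) r r' = map β (map β β) (br1323 σ br α r r') := by
  rw [br1323, br1323, lift_compr₂, map_comp, map_comp, LinearMap.comp_apply, LinearEquiv.coe_coe,
    map_map_assoc]

theorem chybeEl_compr₂ (r : L ⊗[K] L) :
    chybeEl σ (br.compr₂ β) (β ∘ₗ α) r = map β (map β β) (chybeEl σ br α r) := by
  simp only [chybeEl, br1213_compr₂, br1223_compr₂, br1323_compr₂, map_add]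

theorem IsHomLieSuperalgebra.twist (h : IsHomLieSuperalgebra σ br α)
    (hβσ : ∀ x, σ (β x) = β (σ x)) (hβbr : ∀ x y, β (br x y) = br (β x) (β y)) :
    IsHomLieSuperalgebra σ (br.compr₂ β) (β ∘ₗ α) := by
  obtain ⟨hσσ, hσbr, hσα, hskew, hjac⟩ := h
  refine ⟨hσσ, fun x y => ?_, fun x => ?_, fun p q x y hx hy => ?_,
    fun p q s x y z hx hy hz => ?_⟩
  · simp only [LinearMap.compr₂_apply, hβσ, hσbr]
  · simp only [LinearMap.comp_apply, hβσ, hσα]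
  · simp only [LinearMap.compr₂_apply, hskew p q x y hx hy, map_smul]
  · have hjacββ := congrArg (fun v => β (β v)) (hjac p q s x y z hx hy hz)
    simpa only [map_add, map_smul, map_zero, LinearMap.compr₂_apply, LinearMap.comp_apply,
      ← hβbr] using hjacββ

theorem IsMultiplicative.twist (h : IsMultiplicative br α)
    (hβα : ∀ x, α (β x) = β (α x)) (hβbr : ∀ x y, β (br x y) = br (β x) (β y)) :
    IsMultiplicative (br.compr₂ β) (β ∘ₗ α) := fun x y => by
  simp only [LinearMap.comp_apply, LinearMap.compr₂_apply, hβα, h x y, ← hβbr]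

theorem IsComultiplicative.twist (h : IsComultiplicative α Δ)
    (hβα : ∀ x, α (β x) = β (α x)) (hβΔ : map β β ∘ₗ Δ = Δ ∘ₗ β) :
    IsComultiplicative (β ∘ₗ α) (Δ ∘ₗ β) := LinearMap.ext fun x => by
  have hΔβ (z : L) : Δ (β z) = map β β (Δ z) := (LinearMap.congr_fun hβΔ z).symm
  have hΔα (z : L) : Δ (α z) = map α α (Δ z) := LinearMap.congr_fun h z
  have hαβ : α ∘ₗ β = β ∘ₗ α := LinearMap.ext hβα
  simp only [LinearMap.comp_apply, hΔβ, hΔα, map_map, LinearMap.comp_assoc, hαβ]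

theorem IsHomLieSupercoalgebra.twist (h : IsHomLieSupercoalgebra σ α Δ)
    (hβσ : ∀ x, σ (β x) = β (σ x)) (hβα : ∀ x, α (β x) = β (α x))
    (hβΔ : map β β ∘ₗ Δ = Δ ∘ₗ β) :
    IsHomLieSupercoalgebra σ (β ∘ₗ α) (Δ ∘ₗ β) := by
  obtain ⟨hσσ, hσα, hσΔ, hskew, hcojac⟩ := h
  have hσβ : σ ∘ₗ β = β ∘ₗ σ := LinearMap.ext hβσ
  have hαβ : α ∘ₗ β = β ∘ₗ α := LinearMap.ext hβα
  refine ⟨hσσ, fun x => ?_, ?_, fun x => hskew (β x), ?_⟩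
  · simp only [LinearMap.comp_apply, hβσ, hσα]
  · rw [← LinearMap.comp_assoc, hσΔ, LinearMap.comp_assoc, hσβ, LinearMap.comp_assoc]
  have hΔββ : Δ ∘ₗ β ∘ₗ β = map β β ∘ₗ map β β ∘ₗ Δ := by
    rw [← LinearMap.comp_assoc, ← hβΔ, LinearMap.comp_assoc, ← hβΔ]
  have hcomp : map (β ∘ₗ α) (Δ ∘ₗ β) ∘ₗ Δ ∘ₗ β
      = map β (map β β) ∘ₗ map β (map β β) ∘ₗ map α Δ ∘ₗ Δ := LinearMap.ext fun x => by
    have hΔβ : Δ (β x) = map β β (Δ x) := (LinearMap.congr_fun hβΔ x).symm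
    simp only [LinearMap.comp_apply, hΔβ, map_map, LinearMap.comp_assoc, hαβ, hΔββ]
  have hcyc : (LinearMap.id + superCyclic σ + superCyclic σ ∘ₗ superCyclic σ)
        ∘ₗ map β (map β β)
      = map β (map β β) ∘ₗ (LinearMap.id + superCyclic σ + superCyclic σ ∘ₗ superCyclic σ) :=
    TensorProduct.ext' fun _ _ => by
      simp only [LinearMap.add_comp, LinearMap.comp_add, LinearMap.add_apply,
        LinearMap.comp_apply, LinearMap.id_apply, superCyclic_map_of_comm hβσ]
  rw [hcomp, ← LinearMap.comp_assoc, hcyc, LinearMap.comp_assoc,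
    ← LinearMap.comp_assoc _ (map β _), hcyc, LinearMap.comp_assoc, hcojac, LinearMap.comp_zero,
    LinearMap.comp_zero]

theorem IsHomLieSuperbialgebra.twist (h : IsHomLieSuperbialgebra σ br α Δ)
    (hβσ : ∀ x, σ (β x) = β (σ x)) (hβα : ∀ x, α (β x) = β (α x))
    (hβbr : ∀ x y, β (br x y) = br (β x) (β y)) (hβΔ : map β β ∘ₗ Δ = Δ ∘ₗ β) :
    IsHomLieSuperbialgebra σ (br.compr₂ β) (β ∘ₗ α) (Δ ∘ₗ β) := by
  refine ⟨h.1.twist hβσ hβbr, h.2.1.twist hβσ hβα hβΔ, fun p q x y hx hy => ?_⟩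
  have hΔβ (z : L) : map β β (Δ z) = Δ (β z) := LinearMap.congr_fun hβΔ z
  have hcompat := h.2.2 p q (β (β x)) (β (β y))
    ((hx.map_of_comm hβσ).map_of_comm hβσ) ((hy.map_of_comm hβσ).map_of_comm hβσ)
  simp only [LinearMap.comp_apply, LinearMap.compr₂_apply, adT_compr₂, map_adT hβσ hβα hβbr,
    hΔβ, hβbr, hcompat, hβα]

theorem IsCoboundary.twist (h : IsCoboundary σ br α Δ r)
    (hβσ : ∀ x, σ (β x) = β (σ x)) (hβα : ∀ x, α (β x) = β (α x))
    (hβbr : ∀ x y, β (br x y) = br (β x) (β y)) (hβΔ : map β β ∘ₗ Δ = Δ ∘ₗ β)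
    (hβr : map β β r = r) :
    IsCoboundary σ (br.compr₂ β) (β ∘ₗ α) (Δ ∘ₗ β) r := by
  obtain ⟨hbialg, hαr, hΔ⟩ := h
  refine ⟨hbialg.twist hβσ hβα hβbr hβΔ, by rw [map_comp, LinearMap.comp_apply, hαr, hβr],
    fun p x hx => ?_⟩
  rw [adT_compr₂, map_adT hβσ hβα hβbr, hβr, LinearMap.comp_apply,
    hΔ p (β x) (hx.map_of_comm hβσ)]

theorem IsQuasiTriangular.twist (h : IsQuasiTriangular σ br α Δ r)
    (hβσ : ∀ x, σ (β x) = β (σ x)) (hβα : ∀ x, α (β x) = β (α x))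
    (hβbr : ∀ x y, β (br x y) = br (β x) (β y)) (hβΔ : map β β ∘ₗ Δ = Δ ∘ₗ β)
    (hβr : map β β r = r) :
    IsQuasiTriangular σ (br.compr₂ β) (β ∘ₗ α) (Δ ∘ₗ β) r :=
  ⟨h.1.twist hβσ hβα hβbr hβΔ hβr, by rw [chybeEl_compr₂, h.2, map_zero]⟩

end Twist

theorem coboundaryHomLieSuperbialgebra_twist_general
    {K : Type*} [Field K] {L : Type*} [AddCommGroup L] [Module K L]
    (σ : L →ₗ[K] L) (br : L →ₗ[K] L →ₗ[K] L) (α : L →ₗ[K] L) (Δ : L →ₗ[K] L ⊗[K] L)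
    (r : L ⊗[K] L)
    (hc : IsCoboundary σ br α Δ r)
    (β : L →ₗ[K] L)
    (hβσ : ∀ x, σ (β x) = β (σ x))
    (hβα : ∀ x, α (β x) = β (α x))
    (hβbr : ∀ x y, β (br x y) = br (β x) (β y))
    (hβΔ : TensorProduct.map β β ∘ₗ Δ = Δ ∘ₗ β)
    (hβr : TensorProduct.map β β r = r) :
    IsCoboundary σ (br.compr₂ β) (β ∘ₗ α) (Δ ∘ₗ β) r
      ∧ (IsMultiplicative br α ∧ IsComultiplicative α Δ →
          IsMultiplicative (br.compr₂ β) (β ∘ₗ α)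
            ∧ IsComultiplicative (β ∘ₗ α) (Δ ∘ₗ β))
      ∧ (IsQuasiTriangular σ br α Δ r →
          IsQuasiTriangular σ (br.compr₂ β) (β ∘ₗ α) (Δ ∘ₗ β) r) :=
  ⟨hc.twist hβσ hβα hβbr hβΔ hβr,
    fun ⟨hmult, hcomult⟩ => ⟨hmult.twist hβα hβbr, hcomult.twist hβα hβΔ⟩,
    fun hqt => hqt.twist hβσ hβα hβbr hβΔ hβr⟩

/-- Twisting a coboundary (resp. quasi-triangular) Hom-Lie
superbialgebra by a morphism fixing `r`. -/
theorem coboundaryHomLieSuperbialgebra_twist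
    {K : Type*} [Field K] [CharZero K] {L : Type*} [AddCommGroup L] [Module K L]
    (σ : L →ₗ[K] L) (br : L →ₗ[K] L →ₗ[K] L) (α : L →ₗ[K] L) (Δ : L →ₗ[K] L ⊗[K] L)
    (r : L ⊗[K] L)
    (hc : IsCoboundary σ br α Δ r)
    (β : L →ₗ[K] L)
    (hβσ : ∀ x, σ (β x) = β (σ x))
    (hβα : ∀ x, α (β x) = β (α x))
    (hβbr : ∀ x y, β (br x y) = br (β x) (β y))
    (hβΔ : TensorProduct.map β β ∘ₗ Δ = Δ ∘ₗ β)
    (hβr : TensorProduct.map β β r = r) :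
    IsCoboundary σ (br.compr₂ β) (β ∘ₗ α) (Δ ∘ₗ β) r
      ∧ (IsMultiplicative br α ∧ IsComultiplicative α Δ →
          IsMultiplicative (br.compr₂ β) (β ∘ₗ α)
            ∧ IsComultiplicative (β ∘ₗ α) (Δ ∘ₗ β))
      ∧ (IsQuasiTriangular σ br α Δ r →
          IsQuasiTriangular σ (br.compr₂ β) (β ∘ₗ α) (Δ ∘ₗ β) r) :=
  coboundaryHomLieSuperbialgebra_twist_general σ br α Δ r hc β hβσ hβα hβbr hβΔ hβr
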